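/- arXiv:2107.01823 — 2 statements merged into one kernel-verified Lean document; each statement's English description precedes it below -/
import Mathlib

section
/- The stabilizer of the matrix 1_{m,n}^r under the action (P,Q)·A = P A Q⁻¹ of GL(m,ℂ) × GL(n,ℂ), intersected with the subgroup U(m) × U(n) of pairs of unitary matrices, consists exactly of pairs of block-diagonal matrices (S ⊕ P, S ⊕ Q) with S ∈ U(r), P ∈ U(m−r), Q ∈ U(n−r); in particular this intersection is isomorphic as a group to U(r) × U(m−r) × U(n−r). -/
open Matrix

namespace Stmt3

variable (r p q : ℕ)

/-- The matrix `1_{m,n}^r` (with `m = r + p`, `n = r + q`) with identity `r×r` block in the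
upper left corner and zeros elsewhere, written in block form. -/
noncomputable def E : Matrix (Fin r ⊕ Fin p) (Fin r ⊕ Fin q) ℂ :=
  Matrix.fromBlocks 1 0 0 0

/-- The stabilizer condition for a pair of unitary matrices under the action
`(P,Q)·A = P A Q⁻¹`. -/
def InStab (P : Matrix.unitaryGroup (Fin r ⊕ Fin p) ℂ)
    (Q : Matrix.unitaryGroup (Fin r ⊕ Fin q) ℂ) : Prop :=
  (P : Matrix (Fin r ⊕ Fin p) (Fin r ⊕ Fin p) ℂ) * E r p q *
    ((Q⁻¹ : Matrix.unitaryGroup (Fin r ⊕ Fin q) ℂ) : Matrix (Fin r ⊕ Fin q) (Fin r ⊕ Fin q) ℂ)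
    = E r p q

variable {r p q}

lemma mem_fromBlocks {k l : ℕ} {S : Matrix (Fin k) (Fin k) ℂ} {D : Matrix (Fin l) (Fin l) ℂ}
    (hS : S ∈ Matrix.unitaryGroup (Fin k) ℂ) (hD : D ∈ Matrix.unitaryGroup (Fin l) ℂ) :
    Matrix.fromBlocks S 0 0 D ∈ Matrix.unitaryGroup (Fin k ⊕ Fin l) ℂ := by
  rw [Matrix.mem_unitaryGroup_iff]
  rw [Matrix.mem_unitaryGroup_iff] at hS hD
  rw [Matrix.star_eq_conjTranspose] at hS hD ⊢
  rw [Matrix.fromBlocks_conjTranspose, Matrix.fromBlocks_multiply, ← Matrix.fromBlocks_one]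
  simp [hS, hD]

lemma stab_fromBlocks {S : Matrix (Fin r) (Fin r) ℂ} {P' : Matrix (Fin p) (Fin p) ℂ}
    {Q' : Matrix (Fin q) (Fin q) ℂ} (hS : S ∈ Matrix.unitaryGroup (Fin r) ℂ)
    (P : Matrix.unitaryGroup (Fin r ⊕ Fin p) ℂ) (Q : Matrix.unitaryGroup (Fin r ⊕ Fin q) ℂ)
    (hP : (P : Matrix (Fin r ⊕ Fin p) (Fin r ⊕ Fin p) ℂ) = Matrix.fromBlocks S 0 0 P')
    (hQ : (Q : Matrix (Fin r ⊕ Fin q) (Fin r ⊕ Fin q) ℂ) = Matrix.fromBlocks S 0 0 Q') :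
    InStab r p q P Q := by
  have h1 : star S * S = 1 := hS.1
  have h2 : S * star S = 1 := hS.2
  rw [Matrix.star_eq_conjTranspose] at h2
  unfold InStab E
  rw [Matrix.UnitaryGroup.inv_val, hP, hQ, Matrix.star_eq_conjTranspose,
    Matrix.fromBlocks_conjTranspose, Matrix.fromBlocks_multiply, Matrix.fromBlocks_multiply]
  simp [h2]

lemma stab_iff (P : Matrix.unitaryGroup (Fin r ⊕ Fin p) ℂ)
    (Q : Matrix.unitaryGroup (Fin r ⊕ Fin q) ℂ) :
    InStab r p q P Q ↔
      ∃ (S : Matrix (Fin r) (Fin r) ℂ) (P' : Matrix (Fin p) (Fin p) ℂ)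
        (Q' : Matrix (Fin q) (Fin q) ℂ),
        S ∈ Matrix.unitaryGroup (Fin r) ℂ ∧ P' ∈ Matrix.unitaryGroup (Fin p) ℂ ∧
        Q' ∈ Matrix.unitaryGroup (Fin q) ℂ ∧
        (P : Matrix (Fin r ⊕ Fin p) (Fin r ⊕ Fin p) ℂ) = Matrix.fromBlocks S 0 0 P' ∧
        (Q : Matrix (Fin r ⊕ Fin q) (Fin r ⊕ Fin q) ℂ) = Matrix.fromBlocks S 0 0 Q' := by
  constructor
  · intro h
    -- turn h into P * E = E * Q
    have hQmem := Q.2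
    have hQQ : (Q : Matrix (Fin r ⊕ Fin q) (Fin r ⊕ Fin q) ℂ) * star (Q : Matrix (Fin r ⊕ Fin q) (Fin r ⊕ Fin q) ℂ) = 1 := Q.2.2
    have hQQ' : star (Q : Matrix (Fin r ⊕ Fin q) (Fin r ⊕ Fin q) ℂ) * (Q : Matrix (Fin r ⊕ Fin q) (Fin r ⊕ Fin q) ℂ) = 1 := Q.2.1
    have hPE : (P : Matrix (Fin r ⊕ Fin p) (Fin r ⊕ Fin p) ℂ) * E r p q
        = E r p q * (Q : Matrix (Fin r ⊕ Fin q) (Fin r ⊕ Fin q) ℂ) := by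
      unfold InStab at h
      rw [Matrix.UnitaryGroup.inv_val] at h
      have h2 := congrArg (fun M => M * (Q : Matrix (Fin r ⊕ Fin q) (Fin r ⊕ Fin q) ℂ)) h
      simpa [Matrix.mul_assoc, hQQ', Matrix.mul_one] using h2
    -- block decomposition
    set A := Matrix.toBlocks₁₁ (P : Matrix (Fin r ⊕ Fin p) (Fin r ⊕ Fin p) ℂ) with hA
    set B := Matrix.toBlocks₁₂ (P : Matrix (Fin r ⊕ Fin p) (Fin r ⊕ Fin p) ℂ)
    set C := Matrix.toBlocks₂₁ (P : Matrix (Fin r ⊕ Fin p) (Fin r ⊕ Fin p) ℂ)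
    set D := Matrix.toBlocks₂₂ (P : Matrix (Fin r ⊕ Fin p) (Fin r ⊕ Fin p) ℂ)
    set A' := Matrix.toBlocks₁₁ (Q : Matrix (Fin r ⊕ Fin q) (Fin r ⊕ Fin q) ℂ)
    set B' := Matrix.toBlocks₁₂ (Q : Matrix (Fin r ⊕ Fin q) (Fin r ⊕ Fin q) ℂ)
    set C' := Matrix.toBlocks₂₁ (Q : Matrix (Fin r ⊕ Fin q) (Fin r ⊕ Fin q) ℂ)
    set D' := Matrix.toBlocks₂₂ (Q : Matrix (Fin r ⊕ Fin q) (Fin r ⊕ Fin q) ℂ)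
    have hPb : (P : Matrix (Fin r ⊕ Fin p) (Fin r ⊕ Fin p) ℂ) = Matrix.fromBlocks A B C D :=
      (Matrix.fromBlocks_toBlocks _).symm
    have hQb : (Q : Matrix (Fin r ⊕ Fin q) (Fin r ⊕ Fin q) ℂ) = Matrix.fromBlocks A' B' C' D' :=
      (Matrix.fromBlocks_toBlocks _).symm
    rw [hPb, hQb] at hPE
    unfold E at hPE
    rw [Matrix.fromBlocks_multiply, Matrix.fromBlocks_multiply] at hPE
    simp only [Matrix.mul_zero, Matrix.zero_mul, Matrix.mul_one, Matrix.one_mul, add_zero,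
      zero_add] at hPE
    rw [Matrix.fromBlocks_inj] at hPE
    obtain ⟨hAA, hB'0, hC, _⟩ := hPE
    have hB' : B' = 0 := hB'0.symm
    -- unitarity of P
    have hPst : star (P : Matrix (Fin r ⊕ Fin p) (Fin r ⊕ Fin p) ℂ) * (P : Matrix _ _ ℂ) = 1 := P.2.1
    rw [hPb] at hPst
    rw [Matrix.star_eq_conjTranspose, Matrix.fromBlocks_conjTranspose,
      Matrix.fromBlocks_multiply, ← Matrix.fromBlocks_one, Matrix.fromBlocks_inj] at hPst
    obtain ⟨p11, p12, p21, p22⟩ := hPst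
    rw [hC] at p11 p12
    simp only [Matrix.conjTranspose_zero, Matrix.mul_zero, Matrix.zero_mul, add_zero] at p11 p12 p22
    -- A unitary
    have hAunit : A ∈ Matrix.unitaryGroup (Fin r) ℂ := by
      rw [Matrix.mem_unitaryGroup_iff']
      exact p11
    have hAAH : A * Aᴴ = 1 := hAunit.2
    have hB : B = 0 := by
      have : A * (Aᴴ * B) = 0 := by rw [p12, Matrix.mul_zero]
      rw [← Matrix.mul_assoc, hAAH, Matrix.one_mul] at this
      exact this
    rw [hB] at p22
    simp only [Matrix.conjTranspose_zero, Matrix.zero_mul, zero_add] at p22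
    -- unitarity of Q
    rw [hQb] at hQQ
    rw [Matrix.star_eq_conjTranspose, Matrix.fromBlocks_conjTranspose,
      Matrix.fromBlocks_multiply, ← Matrix.fromBlocks_one, Matrix.fromBlocks_inj] at hQQ
    obtain ⟨q11, q12, q21, q22⟩ := hQQ
    rw [hB'] at q11 q12 q21
    simp only [Matrix.conjTranspose_zero, Matrix.mul_zero, Matrix.zero_mul, add_zero,
      zero_add] at q11 q12 q21
    rw [← hAA] at q12
    have hC' : C' = 0 := by
      have h0 : (A * C'ᴴ)ᴴ = 0 := by rw [q12]; simp
      rw [Matrix.conjTranspose_mul, Matrix.conjTranspose_conjTranspose] at h0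
      have : C' = C' * (Aᴴ * A) := by rw [p11, Matrix.mul_one]
      rw [← Matrix.mul_assoc, h0, Matrix.zero_mul] at this
      exact this
    rw [hC'] at q22
    simp only [Matrix.conjTranspose_zero, Matrix.zero_mul, zero_add] at q22
    refine ⟨A, D, D', hAunit, ?_, ?_, ?_, ?_⟩
    · rw [Matrix.mem_unitaryGroup_iff']; exact p22
    · rw [Matrix.mem_unitaryGroup_iff]; exact q22
    · rw [hPb, hB, hC]
    · rw [hQb, hB', hC', hAA]
  · rintro ⟨S, P', Q', hS, hP', hQ', hP, hQ⟩
    exact stab_fromBlocks hS P Q hP hQ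

/-- the intersection of the stabilizer of `1_{m,n}^r` (for the action
`(P,Q)·A = P A Q⁻¹` of `GL(m,ℂ) × GL(n,ℂ)`) with `U(m) × U(n)` consists exactly of pairs of
block-diagonal matrices `(S ⊕ P', S ⊕ Q')` with `S ∈ U(r)`, `P' ∈ U(m−r)`, `Q' ∈ U(n−r)`;
in particular this intersection is isomorphic as a group to `U(r) × U(m−r) × U(n−r)`. -/
theorem stabilizer_inter_unitary :
    (∀ (P : Matrix.unitaryGroup (Fin r ⊕ Fin p) ℂ)
       (Q : Matrix.unitaryGroup (Fin r ⊕ Fin q) ℂ),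
      InStab r p q P Q ↔
        ∃ (S : Matrix (Fin r) (Fin r) ℂ) (P' : Matrix (Fin p) (Fin p) ℂ)
          (Q' : Matrix (Fin q) (Fin q) ℂ),
          S ∈ Matrix.unitaryGroup (Fin r) ℂ ∧ P' ∈ Matrix.unitaryGroup (Fin p) ℂ ∧
          Q' ∈ Matrix.unitaryGroup (Fin q) ℂ ∧
          (P : Matrix (Fin r ⊕ Fin p) (Fin r ⊕ Fin p) ℂ) = Matrix.fromBlocks S 0 0 P' ∧
          (Q : Matrix (Fin r ⊕ Fin q) (Fin r ⊕ Fin q) ℂ) = Matrix.fromBlocks S 0 0 Q') ∧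
    ∃ e : {PQ : Matrix.unitaryGroup (Fin r ⊕ Fin p) ℂ ×
              Matrix.unitaryGroup (Fin r ⊕ Fin q) ℂ // InStab r p q PQ.1 PQ.2} ≃
            (Matrix.unitaryGroup (Fin r) ℂ × Matrix.unitaryGroup (Fin p) ℂ ×
              Matrix.unitaryGroup (Fin q) ℂ),
      ∀ x y, (e.symm (x * y)).1 = (e.symm x).1 * (e.symm y).1 := by
  refine ⟨stab_iff, ?_⟩
  let f : (Matrix.unitaryGroup (Fin r) ℂ × Matrix.unitaryGroup (Fin p) ℂ ×
        Matrix.unitaryGroup (Fin q) ℂ) →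
      {PQ : Matrix.unitaryGroup (Fin r ⊕ Fin p) ℂ ×
        Matrix.unitaryGroup (Fin r ⊕ Fin q) ℂ // InStab r p q PQ.1 PQ.2} :=
    fun x => ⟨(⟨Matrix.fromBlocks x.1 0 0 x.2.1, mem_fromBlocks x.1.2 x.2.1.2⟩,
        ⟨Matrix.fromBlocks x.1 0 0 x.2.2, mem_fromBlocks x.1.2 x.2.2.2⟩),
      stab_fromBlocks x.1.2 _ _ rfl rfl⟩
  have hbij : Function.Bijective f := by
    constructor
    · rintro ⟨S, P', Q'⟩ ⟨T, P'', Q''⟩ h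
      simp only [f, Subtype.mk_eq_mk, Prod.mk.injEq, Subtype.ext_iff] at h
      obtain ⟨h1, h2⟩ := h
      rw [Matrix.fromBlocks_inj] at h1 h2
      ext1
      · exact Subtype.ext h1.1
      · ext1
        · exact Subtype.ext h1.2.2.2
        · exact Subtype.ext h2.2.2.2
    · rintro ⟨⟨P, Q⟩, h⟩
      obtain ⟨S, P', Q', hS, hP', hQ', hP, hQ⟩ := (stab_iff P Q).mp h
      refine ⟨⟨⟨S, hS⟩, ⟨P', hP'⟩, ⟨Q', hQ'⟩⟩, ?_⟩
      simp only [f]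
      apply Subtype.ext
      apply Prod.ext
      · exact Subtype.ext hP.symm
      · exact Subtype.ext hQ.symm
  refine ⟨(Equiv.ofBijective f hbij).symm, ?_⟩
  intro x y
  simp only [Equiv.symm_symm, Equiv.ofBijective_apply]
  simp only [f, Prod.fst_mul, Subtype.ext_iff, Prod.mk_mul_mk, MulMemClass.mk_mul_mk]
  ext1 <;> simp [Matrix.fromBlocks_multiply]

end Stmt3
end

section
/- For 2×n matrices (n ≥ 2), the polar multiplicities of the generic determinantal variety M_{2,n}^2 = {rank < 2} ⊂ ℂ^{2×n} are e_{2,n}^{1,0} = n, e_{2,n}^{1,1} = 2(n−1), e_{2,n}^{1,2} = n, and e_{2,n}^{1,k} = 0 for k > 2. Equivalently, with G = ℙ^{n−1} × ℙ^1 and S_i, Q_i the tautological sub- and quotient line bundles on the factors, (−1)^{n+2−1−1} ∫_G s_k(Q_1 ⊗ Q_2) · s_{n−k}(S_1 ⊗ S_2) takes these values for k = 0, 1, 2. -/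
open MvPolynomial

namespace Stmt11

/-- The hyperplane class `a` of the factor `ℙ^{n−1}` in the Chow ring model
`ℤ[a,b]/⟨aⁿ, b²⟩` of `ℙ^{n−1} × ℙ¹`. -/
noncomputable def a : MvPolynomial (Fin 2) ℤ := MvPolynomial.X 0

/-- The hyperplane class `b` of the factor `ℙ¹`. -/
noncomputable def b : MvPolynomial (Fin 2) ℤ := MvPolynomial.X 1

/-- The ideal of relations `⟨aⁿ, b²⟩` presenting the Chow ring of `ℙ^{n−1} × ℙ¹`. -/
noncomputable def chowRel (n : ℕ) : Ideal (MvPolynomial (Fin 2) ℤ) :=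
  Ideal.span {a ^ n, b ^ 2}

/-- The total Chern class of `Q₁ ⊗ Q₂` on `ℙ^{n−1} × ℙ¹` (for `m = 2`, `r = 1`):
`c(Q₁ ⊗ Q₂) = Σ_{i=0}^{n-1} aⁱ (1+b)^{n−1−i}`. -/
noncomputable def cQ (n : ℕ) : MvPolynomial (Fin 2) ℤ :=
  ∑ i ∈ Finset.range n, a ^ i * (1 + b) ^ (n - 1 - i)

/-- The total Chern class of the line bundle `S₁ ⊗ S₂`: `c(S₁ ⊗ S₂) = 1 + a + b`. -/
noncomputable def cS : MvPolynomial (Fin 2) ℤ := 1 + a + b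

/-- Integration over `G = ℙ^{n−1} × ℙ¹`: the coefficient of the fundamental monomial
`a^{n−1}·b`. -/
noncomputable def integrate (n : ℕ) (f : MvPolynomial (Fin 2) ℤ) : ℤ :=
  MvPolynomial.coeff (Finsupp.single (0 : Fin 2) (n - 1) + Finsupp.single (1 : Fin 2) 1) f

end Stmt11

/-!
Record the degree by a formal variable `T`: `p ↦ ∑_d p_d T^d` is a ring map
`ℤ[a,b] → (ℤ[a,b]/⟨aⁿ,b²⟩)⟦T⟧`, and the defining relations of the Segre classes say that the
generating series of `s(Q₁⊗Q₂)` and `s(S₁⊗S₂)` are inverse to the images of `c(Q₁⊗Q₂)` and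
`c(S₁⊗S₂) = 1 + (a+b)T`. Hence `s_d(S₁⊗S₂) = (-(a+b))^d`, while the geometric-sum identity
`c(Q₁⊗Q₂)·(1 + (b-a)T) = (1+bT)ⁿ - aⁿTⁿ = (1+bT)ⁿ` together with `b² = 0` gives
`s(Q₁⊗Q₂) = (1 + (b-a)T)(1 - nbT) = 1 - (a+(n-1)b)T + nabT²`. Since `b² = 0`, each product
`s_k(Q₁⊗Q₂)·s_{n-k}(S₁⊗S₂)` is an explicit multiple of the fundamental class `a^{n-1}b`.
-/

open Finset

namespace MvPolynomial
variable {σ R : Type*}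

section CommSemiring
variable [CommSemiring R]

attribute [local instance] MvPolynomial.gradedAlgebra in
theorem homogeneousComponent_mul (p q : MvPolynomial σ R) (d : ℕ) :
    homogeneousComponent d (p * q) =
      ∑ ij ∈ antidiagonal d, homogeneousComponent ij.1 p * homogeneousComponent ij.2 q := by
  simp only [← decomposition.decompose'_apply]
  exact (congrArg (fun x => (x d : MvPolynomial σ R))
    (DirectSum.decompose_mul (homogeneousSubmodule σ R) p q)).trans
    (DirectSum.coe_mul_apply_eq_sum_antidiagonal _ _ _ _)

theorem homogeneousComponent_one (d : ℕ) :
    homogeneousComponent d (1 : MvPolynomial σ R) = if d = 0 then 1 else 0 :=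
  homogeneousComponent_of_mem ((mem_homogeneousSubmodule _ _).2 (isHomogeneous_one σ R))

theorem homogeneousComponent_X (d : ℕ) (i : σ) :
    homogeneousComponent d (X i : MvPolynomial σ R) = if d = 1 then X i else 0 :=
  homogeneousComponent_of_mem ((mem_homogeneousSubmodule _ _).2 (isHomogeneous_X R i))

noncomputable def homogeneousSeries : MvPolynomial σ R →+* PowerSeries (MvPolynomial σ R) where
  toFun p := PowerSeries.mk fun d => homogeneousComponent d p
  map_one' := by ext d; simp [homogeneousComponent_one, PowerSeries.coeff_one]
  map_mul' p q := by ext d; simp [homogeneousComponent_mul, PowerSeries.coeff_mul]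
  map_zero' := by ext d; simp
  map_add' p q := by ext d; simp

@[simp] theorem coeff_homogeneousSeries (p : MvPolynomial σ R) (d : ℕ) :
    PowerSeries.coeff d (homogeneousSeries p) = homogeneousComponent d p :=
  PowerSeries.coeff_mk d fun d => homogeneousComponent d p

@[simp] theorem homogeneousSeries_X (i : σ) :
    homogeneousSeries (X i : MvPolynomial σ R) = PowerSeries.C (X i) * PowerSeries.X := by
  ext d : 1
  simp [homogeneousComponent_X, PowerSeries.coeff_X]

end CommSemiring

variable [CommRing R]

theorem mk_eq_coeff_of_homogeneousSeries_mul_eq_one {I : Ideal (MvPolynomial σ R)}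
    {c : MvPolynomial σ R} {s : ℕ → MvPolynomial σ R}
    (hs : ∀ d : ℕ, (∑ jk ∈ antidiagonal d, homogeneousComponent jk.1 c * s jk.2)
      - (if d = 0 then 1 else 0) ∈ I)
    {ψ : PowerSeries (MvPolynomial σ R ⧸ I)}
    (hψ : (homogeneousSeries c).map (Ideal.Quotient.mk I) * ψ = 1) (d : ℕ) :
    Ideal.Quotient.mk I (s d) = PowerSeries.coeff d ψ := by
  have hmul : (homogeneousSeries c).map (Ideal.Quotient.mk I) *
      PowerSeries.mk (fun d => Ideal.Quotient.mk I (s d)) = 1 := by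
    ext d
    have := Ideal.Quotient.eq.2 (hs d)
    simpa [PowerSeries.coeff_mul, PowerSeries.coeff_one, apply_ite (Ideal.Quotient.mk I)]
      using this
  rw [← left_inv_eq_right_inv ((mul_comm _ _).trans hmul) hψ, PowerSeries.coeff_mk]

end MvPolynomial

theorem add_pow_of_sq_eq_zero {R : Type*} [CommRing R] {x y : R} (hy : y ^ 2 = 0) (m : ℕ) :
    (x + y) ^ m = x ^ m + m * x ^ (m - 1) * y := by
  simpa [Polynomial.derivative_X_pow] using
    Polynomial.eval_add_of_sq_eq_zero (Polynomial.X ^ m) x y hy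

theorem PowerSeries.one_add_C_mul_X_mul_mk_neg_pow {R : Type*} [CommRing R] (u : R) :
    (1 + C u * X) * mk (fun d => (-u) ^ d) = 1 := by
  have := congrArg (rescale (-u)) (mk_one_mul_one_sub_eq_one (S := R))
  rw [map_mul, rescale_mk, map_sub, rescale_X, map_one, mul_comm] at this
  simpa [sub_eq_add_neg] using this

namespace Stmt11

noncomputable def segreSeriesQ (n : ℕ) : PowerSeries (MvPolynomial (Fin 2) ℤ ⧸ chowRel n) :=
  1 - PowerSeries.C (Ideal.Quotient.mk (chowRel n) (a + (n - 1) * b)) * PowerSeries.X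
    + PowerSeries.C (Ideal.Quotient.mk (chowRel n) (n * a * b)) * PowerSeries.X ^ 2

def polarMultiplicity (n k : ℕ) : ℤ :=
  if k = 0 then (n : ℤ) else if k = 1 then 2 * ((n : ℤ) - 1) else if k = 2 then (n : ℤ) else 0

section ChowRing
variable {n : ℕ}

local notation "π" => Ideal.Quotient.mk (chowRel n)

theorem mk_a_pow_eq_zero : π a ^ n = 0 := by
  rw [← map_pow, Ideal.Quotient.eq_zero_iff_mem]
  exact Ideal.subset_span (by simp)

theorem mk_b_sq_eq_zero : π b ^ 2 = 0 := by
  rw [← map_pow, Ideal.Quotient.eq_zero_iff_mem]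
  exact Ideal.subset_span (by simp)

theorem integrate_eq_zero_of_mem (hn : 1 ≤ n) {p : MvPolynomial (Fin 2) ℤ}
    (hp : p ∈ chowRel n) : integrate n p = 0 := by
  obtain ⟨u, v, rfl⟩ := Ideal.mem_span_pair.1 hp
  rw [integrate, a, b, X_pow_eq_monomial, X_pow_eq_monomial, coeff_add, coeff_mul_monomial',
    coeff_mul_monomial', if_neg, if_neg, add_zero]
  · intro h
    simpa using h 1
  · intro h
    have : n ≤ n - 1 := by simpa using h 0
    omega

theorem integrate_eq_of_mk_eq (hn : 1 ≤ n) {p : MvPolynomial (Fin 2) ℤ} {c : ℤ}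
    (h : π p = c * π a ^ (n - 1) * π b) : integrate n p = c := by
  have hp : π p = π (MvPolynomial.C c * a ^ (n - 1) * b) := by simpa using h
  rw [← sub_eq_zero, ← integrate_eq_zero_of_mem hn (Ideal.Quotient.eq.1 hp), integrate,
    integrate, coeff_sub, a, b, X_pow_eq_monomial, MvPolynomial.C_mul_monomial,
    ← pow_one (X 1 : MvPolynomial (Fin 2) ℤ), X_pow_eq_monomial, monomial_mul,
    MvPolynomial.coeff_monomial]
  simp

theorem map_homogeneousSeries_cS :
    (homogeneousSeries cS).map π = 1 + PowerSeries.C (π a + π b) * PowerSeries.X := by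
  simp [cS, a, b, add_mul, add_assoc]

theorem mk_segreS {sS : ℕ → MvPolynomial (Fin 2) ℤ}
    (hsS : ∀ d : ℕ, (∑ jk ∈ antidiagonal d, homogeneousComponent jk.1 cS * sS jk.2)
      - (if d = 0 then 1 else 0) ∈ chowRel n) (d : ℕ) :
    π (sS d) = (-(π a + π b)) ^ d := by
  rw [mk_eq_coeff_of_homogeneousSeries_mul_eq_one hsS
    (map_homogeneousSeries_cS ▸ PowerSeries.one_add_C_mul_X_mul_mk_neg_pow _),
    PowerSeries.coeff_mk]

theorem map_homogeneousSeries_cQ_mul_segreSeriesQ :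
    (homogeneousSeries (cQ n)).map π * segreSeriesQ n = 1 := by
  have hx : (PowerSeries.C (π a) * PowerSeries.X) ^ n = 0 := by
    rw [mul_pow, ← map_pow, mk_a_pow_eq_zero, map_zero, zero_mul]
  have hε : (PowerSeries.C (π b) * PowerSeries.X) ^ 2 = 0 := by
    rw [mul_pow, ← map_pow, mk_b_sq_eq_zero, map_zero, zero_mul]
  have hgeom : (homogeneousSeries (cQ n)).map π *
      ((1 + PowerSeries.C (π b) * PowerSeries.X) - PowerSeries.C (π a) * PowerSeries.X) =
      (1 + PowerSeries.C (π b) * PowerSeries.X) ^ n := by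
    have ha : homogeneousSeries a = PowerSeries.C a * PowerSeries.X := homogeneousSeries_X 0
    have hb : homogeneousSeries b = PowerSeries.C b * PowerSeries.X := homogeneousSeries_X 1
    simp only [cQ, map_sum, map_mul, map_pow, map_add, map_one, ha, hb, PowerSeries.map_C,
      PowerSeries.map_X]
    linear_combination -(geom_sum₂_mul (PowerSeries.C (π a) * PowerSeries.X)
      (1 + PowerSeries.C (π b) * PowerSeries.X) n) - hx
  have hyn : (1 + PowerSeries.C (π b) * PowerSeries.X) ^ n =
      1 + (n : PowerSeries (MvPolynomial (Fin 2) ℤ ⧸ chowRel n)) *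
        (PowerSeries.C (π b) * PowerSeries.X) := by
    simp [add_pow_of_sq_eq_zero hε]
  rw [segreSeriesQ]
  simp only [map_add, map_mul, map_sub, map_natCast, map_one]
  linear_combination (1 - n * (PowerSeries.C (π b) * PowerSeries.X)) * (hgeom + hyn)
    + (n * (homogeneousSeries (cQ n)).map π - n ^ 2) * hε

theorem mk_segreQ {sQ : ℕ → MvPolynomial (Fin 2) ℤ}
    (hsQ : ∀ d : ℕ, (∑ jk ∈ antidiagonal d,
        homogeneousComponent jk.1 (cQ n) * sQ jk.2) - (if d = 0 then 1 else 0) ∈ chowRel n)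
    (d : ℕ) : π (sQ d) = PowerSeries.coeff d (segreSeriesQ n) :=
  mk_eq_coeff_of_homogeneousSeries_mul_eq_one hsQ map_homogeneousSeries_cQ_mul_segreSeriesQ d

theorem coeff_segreSeriesQ (d : ℕ) :
    PowerSeries.coeff d (segreSeriesQ n) = if d = 0 then 1 else if d = 1 then
      -(π a + (n - 1) * π b) else if d = 2 then n * π a * π b else 0 := by
  rw [segreSeriesQ, map_add (PowerSeries.coeff d), map_sub (PowerSeries.coeff d),
    PowerSeries.coeff_one, PowerSeries.coeff_C_mul, PowerSeries.coeff_X, PowerSeries.coeff_C_mul,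
    PowerSeries.coeff_X_pow]
  rcases d with _ | _ | _ | d <;> simp

theorem mk_segreQ_mul_segreS (hn : 2 ≤ n) {sQ sS : ℕ → MvPolynomial (Fin 2) ℤ}
    (hsQ : ∀ d : ℕ, (∑ jk ∈ antidiagonal d,
        homogeneousComponent jk.1 (cQ n) * sQ jk.2) - (if d = 0 then 1 else 0) ∈ chowRel n)
    (hsS : ∀ d : ℕ, (∑ jk ∈ antidiagonal d,
        homogeneousComponent jk.1 cS * sS jk.2) - (if d = 0 then 1 else 0) ∈ chowRel n)
    (k : ℕ) :
    π (sQ k * sS (n - k)) =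
      (((-1) ^ n * polarMultiplicity n k : ℤ) : _) * π a ^ (n - 1) * π b := by
  rw [map_mul, mk_segreQ hsQ, coeff_segreSeriesQ, mk_segreS hsS, neg_pow (π a + π b),
    add_pow_of_sq_eq_zero mk_b_sq_eq_zero]
  have ha := mk_a_pow_eq_zero (n := n)
  have hb := mk_b_sq_eq_zero (n := n)
  generalize π a = x at ha ⊢
  generalize π b = y at hb ⊢
  obtain ⟨m, rfl⟩ : ∃ m, n = m + 2 := ⟨n - 2, by omega⟩
  rcases k with _ | _ | _ | k <;>
    push_cast [polarMultiplicity, Nat.add_one_sub_one, add_tsub_cancel_right, reduceIte]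
  · linear_combination (-1) ^ m * ha
  · linear_combination (-1) ^ m * ha + (-1) ^ m * (m + 1) ^ 2 * x ^ m * hb
  · linear_combination (-1) ^ m * (m + 2) * m * x * x ^ (m - 1) * hb
  · simp

end ChowRing

theorem polar_multiplicities_two_by_n_general (n : ℕ) (hn : 2 ≤ n)
    (sQ sS : ℕ → MvPolynomial (Fin 2) ℤ)
    (hsQ : ∀ d : ℕ,
      (∑ jk ∈ Finset.HasAntidiagonal.antidiagonal d,
          (MvPolynomial.homogeneousComponent jk.1 (cQ n)) * sQ jk.2)
        - (if d = 0 then 1 else 0) ∈ chowRel n)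
    (hsS : ∀ d : ℕ,
      (∑ jk ∈ Finset.HasAntidiagonal.antidiagonal d,
          (MvPolynomial.homogeneousComponent jk.1 cS) * sS jk.2)
        - (if d = 0 then 1 else 0) ∈ chowRel n) :
    ∀ k ≤ n, (-1 : ℤ) ^ n * integrate n (sQ k * sS (n - k))
      = if k = 0 then (n : ℤ) else if k = 1 then 2 * ((n : ℤ) - 1)
        else if k = 2 then (n : ℤ) else 0 := by
  intro k _
  rw [integrate_eq_of_mk_eq (by omega) (mk_segreQ_mul_segreS hn hsQ hsS k), ← mul_assoc,
    ← pow_add, Even.neg_one_pow ⟨n, rfl⟩, one_mul]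
  rfl

/-- For `2×n` matrices (`n ≥ 2`), the polar multiplicities of
`M_{2,n}^2 = {rank < 2} ⊂ ℂ^{2×n}` are `e^{1,0} = n`, `e^{1,1} = 2(n−1)`, `e^{1,2} = n`,
and `e^{1,k} = 0` for `k > 2`.  Equivalently, with `G = ℙ^{n−1} × ℙ¹` and `S_i, Q_i` the
tautological sub- and quotient line bundles, `(−1)^{n+2−1−1}∫_G s_k(Q₁⊗Q₂)·s_{n−k}(S₁⊗S₂)`
takes these values, where the Segre classes `s_•` are characterized (in the Chow ring
`ℤ[a,b]/⟨aⁿ,b²⟩`) as the homogeneous families inverse to the corresponding total Chern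
classes. -/
theorem polar_multiplicities_two_by_n (n : ℕ) (hn : 2 ≤ n)
    (sQ sS : ℕ → MvPolynomial (Fin 2) ℤ)
    (hsQhom : ∀ k, (sQ k).IsHomogeneous k)
    (hsShom : ∀ k, (sS k).IsHomogeneous k)
    (hsQ : ∀ d : ℕ,
      (∑ jk ∈ Finset.HasAntidiagonal.antidiagonal d,
          (MvPolynomial.homogeneousComponent jk.1 (cQ n)) * sQ jk.2)
        - (if d = 0 then 1 else 0) ∈ chowRel n)
    (hsS : ∀ d : ℕ,
      (∑ jk ∈ Finset.HasAntidiagonal.antidiagonal d,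
          (MvPolynomial.homogeneousComponent jk.1 cS) * sS jk.2)
        - (if d = 0 then 1 else 0) ∈ chowRel n) :
    ∀ k ≤ n, (-1 : ℤ) ^ n * integrate n (sQ k * sS (n - k))
      = if k = 0 then (n : ℤ) else if k = 1 then 2 * ((n : ℤ) - 1)
        else if k = 2 then (n : ℤ) else 0 :=
  polar_multiplicities_two_by_n_general n hn sQ sS hsQ hsS

end Stmt11
end
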